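/- Let Ω ⊆ ℝ^d be open and contained in a slab, i.e., there are a unit vector e ∈ ℝ^d and reals a < b such that Ω ⊆ {x : a < ⟨e,x⟩ < b}. Then for every u in the domain of the Dirichlet gradient grad₀ (the closure of the gradient on C_c^∞(Ω) in L²), one has ‖u‖_{L²(Ω)} ≤ (b−a)·‖grad₀ u‖_{L²(Ω)^d} (Poincaré inequality). -/

import Mathlib

/-!
Integrate by parts against the affine function `ℓ x = ⟪e, x⟫ - (a + b) / 2`, whose derivative
along `e` is `1` and which is bounded by `(b - a) / 2` on the slab:
`∫ φ² = -2 ∫ φ ∂ₑφ ℓ ≤ (b - a) ∫ |φ| ‖∇φ‖ ≤ (b - a) ‖φ‖ ‖∇φ‖` by Cauchy–Schwarz.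
The pairs `(φ, ∇φ)` with `φ ∈ C_c^∞(Ω)` already form a subspace, and the inequality describes a
closed set, so it passes to the closure of the graph.
-/

open MeasureTheory

/-- The graph of the gradient on smooth compactly supported functions in `Ω`, as a
subspace of `L²(ℝ^d) × L²(ℝ^d)^d`: the span of all pairs `(φ, grad φ)` with
`φ ∈ C_c^∞(Ω)`. -/
noncomputable def gradGraph (d : ℕ) (Ω : Set (EuclideanSpace ℝ (Fin d))) :
    Submodule ℝ (Lp ℝ 2 (volume : Measure (EuclideanSpace ℝ (Fin d))) ×
      Lp (EuclideanSpace ℝ (Fin d)) 2 (volume : Measure (EuclideanSpace ℝ (Fin d)))) :=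
  Submodule.span ℝ {p | ∃ φ : EuclideanSpace ℝ (Fin d) → ℝ,
    ContDiff ℝ (⊤ : ℕ∞) φ ∧ HasCompactSupport φ ∧ tsupport φ ⊆ Ω ∧
    ⇑p.1 =ᵐ[volume] φ ∧ ⇑p.2 =ᵐ[volume] gradient φ}

/-- The graph of `grad₀`, the closure of the gradient on `C_c^∞(Ω)` in `L²`. -/
noncomputable def grad0Graph (d : ℕ) (Ω : Set (EuclideanSpace ℝ (Fin d))) :=
  (gradGraph d Ω).topologicalClosure

section Gradient

variable {E : Type*} [NormedAddCommGroup E] [InnerProductSpace ℝ E] [CompleteSpace E]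
  {f g : E → ℝ} {x : E}

lemma gradient_fun_add (hf : DifferentiableAt ℝ f x) (hg : DifferentiableAt ℝ g x) :
    gradient (fun y => f y + g y) x = gradient f x + gradient g x := by
  rw [gradient, gradient, gradient, fderiv_fun_add hf hg, map_add]

lemma gradient_fun_const_smul (hf : DifferentiableAt ℝ f x) (c : ℝ) :
    gradient (fun y => c • f y) x = c • gradient f x := by
  rw [gradient, gradient, fderiv_fun_const_smul hf c, map_smul]

lemma ContDiff.continuous_gradient (hf : ContDiff ℝ 1 f) : Continuous (gradient f) :=
  (InnerProductSpace.toDual ℝ E).symm.continuous.comp (hf.continuous_fderiv one_ne_zero)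

end Gradient

section L2

variable {α E F : Type*} [MeasurableSpace α] {μ : Measure α}

lemma MeasureTheory.Lp.norm_sq_eq_integral_norm_sq [NormedAddCommGroup E] [InnerProductSpace ℝ E]
    (f : Lp E 2 μ) : ‖f‖ ^ 2 = ∫ x, ‖f x‖ ^ 2 ∂μ := by
  rw [← real_inner_self_eq_norm_sq, L2.inner_def]
  simp only [real_inner_self_eq_norm_sq]

lemma MeasureTheory.Lp.integral_norm_mul_norm_le [NormedAddCommGroup E] [NormedAddCommGroup F]
    (f : Lp E 2 μ) (g : Lp F 2 μ) : ∫ x, ‖f x‖ * ‖g x‖ ∂μ ≤ ‖f‖ * ‖g‖ := by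
  have hf := (Lp.memLp f).norm
  have hg := (Lp.memLp g).norm
  have h_inner : ∫ x, ‖f x‖ * ‖g x‖ ∂μ = inner ℝ (hf.toLp _) (hg.toLp _) := by
    rw [L2.inner_def]
    refine integral_congr_ae ?_
    filter_upwards [hf.coeFn_toLp, hg.coeFn_toLp] with x hfx hgx
    simp [hfx, hgx, mul_comm]
  have hf_norm : ‖hf.toLp _‖ = ‖f‖ := by rw [Lp.norm_toLp, eLpNorm_norm, Lp.norm_def]
  have hg_norm : ‖hg.toLp _‖ = ‖g‖ := by rw [Lp.norm_toLp, eLpNorm_norm, Lp.norm_def]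
  rw [h_inner, ← hf_norm, ← hg_norm]
  exact real_inner_le_norm _ _

end L2

section Slab

variable {E : Type*} [NormedAddCommGroup E] [InnerProductSpace ℝ E] [FiniteDimensional ℝ E]
  [MeasurableSpace E] [BorelSpace E] (μ : Measure E) [μ.IsAddHaarMeasure]
  {φ : E → ℝ} {e : E} {a b : ℝ}

lemma integral_sq_eq_neg_integral_inner_gradient_mul (hφ : ContDiff ℝ 1 φ)
    (hc : HasCompactSupport φ) (he : ‖e‖ = 1) (c : ℝ) :
    ∫ x, φ x ^ 2 ∂μ =
      -∫ x, 2 * φ x * inner ℝ (gradient φ x) e * (inner ℝ e x - c) ∂μ := by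
  set ℓ : E → ℝ := fun x => inner ℝ e x - c
  have hℓ : ∀ x, HasFDerivAt ℓ (innerSL ℝ e) x := fun x =>
    ((innerSL ℝ e).hasFDerivAt (x := x)).sub_const c
  obtain ⟨C, hℓ_lip⟩ : ∃ C, LipschitzWith C ℓ :=
    ⟨_, (innerSL ℝ e).lipschitz.sub (LipschitzWith.const c)⟩
  have hℓ_deriv (x : E) : lineDeriv ℝ ℓ x e = 1 := by
    rw [((hℓ x).hasLineDerivAt e).lineDeriv, innerSL_apply_apply, real_inner_self_eq_norm_sq,
      he, one_pow]
  have hφ_diff : Differentiable ℝ φ := hφ.differentiable one_ne_zero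
  have hsq_deriv (x : E) : lineDeriv ℝ (φ * φ) x (-e) =
      -(2 * φ x * inner ℝ (gradient φ x) e) := by
    rw [(((hφ_diff x).hasFDerivAt.mul (hφ_diff x).hasFDerivAt).hasLineDerivAt (-e)).lineDeriv,
      inner_gradient_left]
    simp only [add_apply, smul_apply, map_neg, smul_eq_mul]
    ring
  obtain ⟨D, hsq_lip⟩ := (hφ.mul hφ).lipschitzWith_of_hasCompactSupport hc.mul_left one_ne_zero
  calc ∫ x, φ x ^ 2 ∂μ = ∫ x, lineDeriv ℝ ℓ x e * (φ * φ) x ∂μ := by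
        simp only [hℓ_deriv, Pi.mul_apply, one_mul, sq]
    _ = ∫ x, lineDeriv ℝ (φ * φ) x (-e) * ℓ x ∂μ :=
        hℓ_lip.integral_lineDeriv_mul_eq hsq_lip hc.mul_left e
    _ = _ := by simp only [hsq_deriv, neg_mul, integral_neg, ℓ]

theorem integral_sq_le_mul_integral_abs_mul_norm_gradient (hφ : ContDiff ℝ 1 φ)
    (hc : HasCompactSupport φ) (he : ‖e‖ = 1)
    (hslab : tsupport φ ⊆ {x | a < inner ℝ e x ∧ inner ℝ e x < b}) :
    ∫ x, φ x ^ 2 ∂μ ≤ (b - a) * ∫ x, |φ x| * ‖gradient φ x‖ ∂μ := by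
  have hbound (x : E) : ‖2 * φ x * inner ℝ (gradient φ x) e * (inner ℝ e x - (a + b) / 2)‖ ≤
      (b - a) * (|φ x| * ‖gradient φ x‖) := by
    by_cases hx : x ∈ tsupport φ
    · obtain ⟨hax, hxb⟩ := hslab hx
      have h_center : |inner ℝ e x - (a + b) / 2| ≤ (b - a) / 2 :=
        abs_le.2 ⟨by linarith, by linarith⟩
      have h_cs : |inner ℝ (gradient φ x) e| ≤ ‖gradient φ x‖ := by
        simpa [he] using abs_real_inner_le_norm (gradient φ x) e
      rw [Real.norm_eq_abs, abs_mul, abs_mul, abs_mul, abs_two]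
      calc 2 * |φ x| * |inner ℝ (gradient φ x) e| * |inner ℝ e x - (a + b) / 2|
          ≤ 2 * |φ x| * ‖gradient φ x‖ * ((b - a) / 2) := by gcongr
        _ = (b - a) * (|φ x| * ‖gradient φ x‖) := by ring
    · simp [image_eq_zero_of_notMem_tsupport hx]
  have h_int : Integrable (fun x => |φ x| * ‖gradient φ x‖) μ := by
    refine Continuous.integrable_of_hasCompactSupport ?_ ?_
    · exact hφ.continuous.abs.mul hφ.continuous_gradient.norm
    · simp only [← Real.norm_eq_abs]
      exact hc.norm.mul_right
  rw [integral_sq_eq_neg_integral_inner_gradient_mul μ hφ hc he ((a + b) / 2),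
    ← integral_const_mul]
  exact (neg_le_abs _).trans
    (norm_integral_le_of_norm_le (h_int.const_mul _) (.of_forall hbound))

theorem norm_le_mul_norm_of_ae_eq_gradient (hφ : ContDiff ℝ 1 φ) (hc : HasCompactSupport φ)
    (he : ‖e‖ = 1) (hab : a ≤ b) (hslab : tsupport φ ⊆ {x | a < inner ℝ e x ∧ inner ℝ e x < b})
    {u : Lp ℝ 2 μ} {v : Lp E 2 μ} (hu : u =ᵐ[μ] φ) (hv : v =ᵐ[μ] gradient φ) :
    ‖u‖ ≤ (b - a) * ‖v‖ := by
  have h_sq : ‖u‖ ^ 2 ≤ ‖u‖ * ((b - a) * ‖v‖) :=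
    calc ‖u‖ ^ 2 = ∫ x, φ x ^ 2 ∂μ := by
          rw [Lp.norm_sq_eq_integral_norm_sq]
          refine integral_congr_ae ?_
          filter_upwards [hu] with x hx
          simp [hx]
      _ ≤ (b - a) * ∫ x, |φ x| * ‖gradient φ x‖ ∂μ :=
          integral_sq_le_mul_integral_abs_mul_norm_gradient μ hφ hc he hslab
      _ = (b - a) * ∫ x, ‖u x‖ * ‖v x‖ ∂μ := by
          congr 1
          refine integral_congr_ae ?_
          filter_upwards [hu, hv] with x hux hvx
          simp [hux, hvx]
      _ ≤ (b - a) * (‖u‖ * ‖v‖) :=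
          mul_le_mul_of_nonneg_left (Lp.integral_norm_mul_norm_le u v) (sub_nonneg.2 hab)
      _ = ‖u‖ * ((b - a) * ‖v‖) := by ring
  have : 0 ≤ (b - a) * ‖v‖ := mul_nonneg (sub_nonneg.2 hab) (norm_nonneg v)
  nlinarith [norm_nonneg u]

end Slab

lemma exists_contDiff_of_mem_gradGraph {d : ℕ} {Ω : Set (EuclideanSpace ℝ (Fin d))}
    {p : Lp ℝ 2 (volume : Measure (EuclideanSpace ℝ (Fin d))) ×
      Lp (EuclideanSpace ℝ (Fin d)) 2 (volume : Measure (EuclideanSpace ℝ (Fin d)))}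
    (hp : p ∈ gradGraph d Ω) :
    ∃ φ : EuclideanSpace ℝ (Fin d) → ℝ, ContDiff ℝ (⊤ : ℕ∞) φ ∧ HasCompactSupport φ ∧
      tsupport φ ⊆ Ω ∧ ⇑p.1 =ᵐ[volume] φ ∧ ⇑p.2 =ᵐ[volume] gradient φ := by
  induction hp using Submodule.span_induction with
  | mem q hq => exact hq
  | zero =>
    refine ⟨0, contDiff_const, .zero, by simp, Lp.coeFn_zero _ _ _, ?_⟩
    filter_upwards [Lp.coeFn_zero (EuclideanSpace ℝ (Fin d)) 2 volume] with x hx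
    rw [Prod.snd_zero, hx]
    exact (gradient_fun_const x 0).symm
  | add p q _ _ hp hq =>
    obtain ⟨φ, hφ, hcφ, hsφ, hp1, hp2⟩ := hp
    obtain ⟨ψ, hψ, hcψ, hsψ, hq1, hq2⟩ := hq
    refine ⟨fun x => φ x + ψ x, hφ.add hψ, hcφ.add hcψ,
      (tsupport_add φ ψ).trans (Set.union_subset hsφ hsψ), ?_, ?_⟩
    · filter_upwards [Lp.coeFn_add p.1 q.1, hp1, hq1] with x hx h1 h2
      rw [Prod.fst_add, hx, Pi.add_apply, h1, h2]
    · filter_upwards [Lp.coeFn_add p.2 q.2, hp2, hq2] with x hx h1 h2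
      rw [Prod.snd_add, hx, Pi.add_apply, h1, h2, gradient_fun_add
        (hφ.differentiable (by simp) x) (hψ.differentiable (by simp) x)]
  | smul c p _ hp =>
    obtain ⟨φ, hφ, hcφ, hsφ, hp1, hp2⟩ := hp
    refine ⟨fun x => c • φ x, hφ.const_smul c,
      hcφ.mono (Function.support_const_smul_subset c φ),
      (closure_mono (Function.support_const_smul_subset c φ)).trans hsφ, ?_, ?_⟩
    · filter_upwards [Lp.coeFn_smul c p.1, hp1] with x hx h1
      rw [Prod.smul_fst, hx, Pi.smul_apply, h1]
    · filter_upwards [Lp.coeFn_smul c p.2, hp2] with x hx h1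
      rw [Prod.smul_snd, hx, Pi.smul_apply, h1,
        gradient_fun_const_smul (hφ.differentiable (by simp) x)]

theorem poincare_inequality_general (d : ℕ) (Ω : Set (EuclideanSpace ℝ (Fin d)))
    (e : EuclideanSpace ℝ (Fin d)) (he : ‖e‖ = 1) (a b : ℝ) (hab : a < b)
    (hslab : Ω ⊆ {x | a < (inner ℝ e x : ℝ) ∧ (inner ℝ e x : ℝ) < b}) :
    ∀ p ∈ grad0Graph d Ω, ‖p.1‖ ≤ (b - a) * ‖p.2‖ := by
  intro p hp
  rw [grad0Graph, ← SetLike.mem_coe, Submodule.topologicalClosure_coe] at hp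
  refine closure_minimal (t := {q | ‖q.1‖ ≤ (b - a) * ‖q.2‖}) (fun q hq => ?_) ?_ hp
  · obtain ⟨φ, hφ, hc, hsupp, hq1, hq2⟩ := exists_contDiff_of_mem_gradGraph hq
    exact norm_le_mul_norm_of_ae_eq_gradient volume (hφ.of_le (mod_cast le_top)) hc he
      hab.le (hsupp.trans hslab) hq1 hq2
  · exact isClosed_le continuous_fst.norm (continuous_const.mul continuous_snd.norm)

/-- Poincaré's inequality: if the open set `Ω ⊆ ℝ^d` is contained in a slab
`{x : a < ⟨e,x⟩ < b}` (with `e` a unit vector), then for every `u` in the domain of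
`grad₀` one has `‖u‖_{L²(Ω)} ≤ (b−a)·‖grad₀ u‖_{L²(Ω)^d}`. -/
theorem poincare_inequality (d : ℕ) (Ω : Set (EuclideanSpace ℝ (Fin d))) (hΩ : IsOpen Ω)
    (e : EuclideanSpace ℝ (Fin d)) (he : ‖e‖ = 1) (a b : ℝ) (hab : a < b)
    (hslab : Ω ⊆ {x | a < (inner ℝ e x : ℝ) ∧ (inner ℝ e x : ℝ) < b}) :
    ∀ p ∈ grad0Graph d Ω, ‖p.1‖ ≤ (b - a) * ‖p.2‖ :=
  poincare_inequality_general d Ω e he a b hab hslab
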